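/- Suppose the pseudo-MEMs of a pattern are processed in non-increasing order of length, and within each pseudo-MEM all MEMs of length ≥ L contained in it are found. If at some point t MEMs of length at least ℓ have been found, where ℓ is the length of the next unprocessed pseudo-MEM, then the t longest MEMs of length ≥ L of P have all already been found (any MEM contained in an unprocessed pseudo-MEM has length at most ℓ). -/

import Mathlib

/-!
A MEM occurs in `T`, so by the absence of false negatives all its `k`-mers pass `F`; extending
it as far as possible to the left, then to the right, while every `k`-mer keeps passing yields a
pseudo-MEM containing it. If that pseudo-MEM has been processed the MEM has been found, and
otherwise the MEM is no longer than the pseudo-MEM, whose length is at most `ℓ`.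
-/

open List

variable {α : Type*}

/-- `substr P i j` is the substring `P[i..j]` (inclusive indices). -/
def substr (P : List α) (i j : ℕ) : List α := (P.drop i).take (j - i + 1)

/-- `IsMEM T P i j` : `P[i..j]` is a maximal exact match of `P` w.r.t. `T`:
it occurs in `T`, and it can be extended neither to the left nor to the right
within `P` while still occurring in `T`. -/
def IsMEM (T P : List α) (i j : ℕ) : Prop :=
  i ≤ j ∧ j < P.length ∧ substr P i j <:+: T ∧
  (i = 0 ∨ ¬ substr P (i - 1) j <:+: T) ∧
  (j = P.length - 1 ∨ ¬ substr P i (j + 1) <:+: T)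

/-- All length-`k` substrings (`k`-mers) of `S` pass the filter `F`. -/
def kmersPass (F : List α → Bool) (k : ℕ) (S : List α) : Prop :=
  ∀ w : List α, w.length = k → w <:+: S → F w = true

/-- `IsPseudoMEM F k L P i j` : `P[i..j]` is a maximal substring of `P` of length
at least `L` all of whose `k`-mers pass the filter `F`. -/
def IsPseudoMEM (F : List α → Bool) (k L : ℕ) (P : List α) (i j : ℕ) : Prop :=
  i ≤ j ∧ j < P.length ∧ L ≤ j - i + 1 ∧ kmersPass F k (substr P i j) ∧
  (i = 0 ∨ ¬ kmersPass F k (substr P (i - 1) j)) ∧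
  (j = P.length - 1 ∨ ¬ kmersPass F k (substr P i (j + 1)))

/-- `F` has no false negatives for the `k`-mers of `T`. -/
def NoFalseNeg (F : List α → Bool) (k : ℕ) (T : List α) : Prop :=
  ∀ w : List α, w.length = k → w <:+: T → F w = true

theorem Nat.exists_le_and_eq_zero_or_not_pred {Q : ℕ → Prop} {a : ℕ} (ha : Q a) :
    ∃ i ≤ a, Q i ∧ (i = 0 ∨ ¬ Q (i - 1)) := by
  classical
  have hex : ∃ n, Q n := ⟨a, ha⟩
  refine ⟨Nat.find hex, Nat.find_min' hex ha, Nat.find_spec hex, ?_⟩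
  rcases Nat.eq_zero_or_pos (Nat.find hex) with h0 | hpos
  · exact .inl h0
  · exact .inr (Nat.find_min hex (Nat.sub_lt hpos one_pos))

theorem Nat.exists_ge_and_eq_or_not_succ {R : ℕ → Prop} {b n : ℕ} (hbn : b ≤ n) (hb : R b) :
    ∃ j, b ≤ j ∧ j ≤ n ∧ R j ∧ (j = n ∨ ¬ R (j + 1)) := by
  classical
  refine ⟨Nat.findGreatest R n, Nat.le_findGreatest hbn hb, Nat.findGreatest_le n,
    Nat.findGreatest_spec hbn hb, ?_⟩
  rcases (Nat.findGreatest_le (P := R) n).eq_or_lt with heq | hlt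
  · exact .inl heq
  · exact .inr (Nat.findGreatest_is_greatest (Nat.lt_succ_self _) hlt)

theorem substr_infix_substr {P : List α} {i j i' j' : ℕ} (hi : i ≤ i') (hij' : i' ≤ j')
    (hj : j' ≤ j) : substr P i' j' <:+: substr P i j := by
  obtain ⟨d, rfl⟩ := Nat.exists_eq_add_of_le hi
  have hsuffix : substr P (i + d) j' <:+ (P.drop i).take (d + (j' - (i + d) + 1)) := by
    rw [List.take_add, List.drop_drop]
    exact List.suffix_append _ _
  exact hsuffix.isInfix.trans (List.take_prefix_take_left (by omega)).isInfix

theorem kmersPass.mono {F : List α → Bool} {k : ℕ} {S S' : List α}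
    (hS : kmersPass F k S) (h : S' <:+: S) : kmersPass F k S' :=
  fun w hw hw' => hS w hw (hw'.trans h)

theorem NoFalseNeg.kmersPass_of_infix {F : List α → Bool} {k : ℕ} {S T : List α}
    (hF : NoFalseNeg F k T) (h : S <:+: T) : kmersPass F k S :=
  fun w hw hw' => hF w hw (hw'.trans h)

theorem exists_isPseudoMEM_of_kmersPass {F : List α → Bool} {k L : ℕ} {P : List α} {a b : ℕ}
    (hab : a ≤ b) (hb : b < P.length) (hL : L ≤ b - a + 1) (hpass : kmersPass F k (substr P a b)) :
    ∃ i j, IsPseudoMEM F k L P i j ∧ i ≤ a ∧ b ≤ j := by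
  obtain ⟨i, hia, hpass_i, hleft⟩ :=
    Nat.exists_le_and_eq_zero_or_not_pred (Q := fun i => kmersPass F k (substr P i b)) hpass
  obtain ⟨j, hbj, hjn, hpass_ij, hright⟩ :=
    Nat.exists_ge_and_eq_or_not_succ (R := fun j => kmersPass F k (substr P i j))
      (Nat.le_sub_one_of_lt hb) hpass_i
  -- A left extension of `P[i..j]` would restrict to one of `P[i..b]`, so left-maximality survives.
  have hleft' : i = 0 ∨ ¬ kmersPass F k (substr P (i - 1) j) :=
    hleft.imp_right fun h hj => h (hj.mono (substr_infix_substr le_rfl (by omega) hbj))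
  exact ⟨i, j, ⟨by omega, by omega, by omega, hpass_ij, hleft', hright⟩, hia, hbj⟩

theorem IsMEM.exists_isPseudoMEM {F : List α → Bool} {k L : ℕ} {T P : List α} {a b : ℕ}
    (hF : NoFalseNeg F k T) (hmem : IsMEM T P a b) (hL : L ≤ b - a + 1) :
    ∃ i j, IsPseudoMEM F k L P i j ∧ i ≤ a ∧ b ≤ j :=
  exists_isPseudoMEM_of_kmersPass hmem.1 hmem.2.1 hL (hF.kmersPass_of_infix hmem.2.2.1)

theorem early_stopping_correct_general (F : List α → Bool) (k L ℓ : ℕ) (T P : List α)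
    (hF : NoFalseNeg F k T)
    (processed : ℕ → ℕ → Prop)
    (hunproc : ∀ i j, IsPseudoMEM F k L P i j → ¬ processed i j → j - i + 1 ≤ ℓ)
    (found : Finset (ℕ × ℕ))
    (hall : ∀ a b, IsMEM T P a b → L ≤ b - a + 1 →
      (∃ i j, IsPseudoMEM F k L P i j ∧ processed i j ∧ i ≤ a ∧ b ≤ j) →
      (a, b) ∈ found) :
    ∀ a b, IsMEM T P a b → L ≤ b - a + 1 → (a, b) ∉ found → b - a + 1 ≤ ℓ := by
  intro a b hmem hL hnot
  obtain ⟨i, j, hpseudo, hia, hbj⟩ := hmem.exists_isPseudoMEM hF hL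
  by_cases hproc : processed i j
  · exact absurd (hall a b hmem hL ⟨i, j, hpseudo, hproc, hia, hbj⟩) hnot
  · have := hunproc i j hpseudo hproc
    omega

/-- early-stopping correctness: processing pseudo-MEMs in
non-increasing order of length (so every unprocessed pseudo-MEM has length at
most `ℓ`) and having found all MEMs of length `≥ L` contained in processed
pseudo-MEMs, with `t` found MEMs of length at least `ℓ`, every MEM of length
`≥ L` not yet found has length at most `ℓ`: the top-`t` MEMs are found. -/
theorem early_stopping_correct (F : List α → Bool) (k L ℓ t : ℕ) (T P : List α)
    (hk : 1 ≤ k) (hkL : k < L) (hF : NoFalseNeg F k T)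
    (processed : ℕ → ℕ → Prop)
    (hunproc : ∀ i j, IsPseudoMEM F k L P i j → ¬ processed i j → j - i + 1 ≤ ℓ)
    (found : Finset (ℕ × ℕ))
    (hfound : ∀ ij ∈ found, IsMEM T P ij.1 ij.2 ∧ L ≤ ij.2 - ij.1 + 1)
    (hall : ∀ a b, IsMEM T P a b → L ≤ b - a + 1 →
      (∃ i j, IsPseudoMEM F k L P i j ∧ processed i j ∧ i ≤ a ∧ b ≤ j) →
      (a, b) ∈ found)
    (hcard : found.card = t)
    (hlen : ∀ ij ∈ found, ℓ ≤ ij.2 - ij.1 + 1) :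
    ∀ a b, IsMEM T P a b → L ≤ b - a + 1 → (a, b) ∉ found → b - a + 1 ≤ ℓ :=
  early_stopping_correct_general F k L ℓ T P hF processed hunproc found hall
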